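/- (Correctness / non-increasing order property of SGRAND.) Suppose n ≥ 1, assume the reliability hypotheses (H1) and (H2), and let (S, e) be an SGRAND run. For every g such that S g and S (g+1) are both nonempty, Q(e (g+1)) ≤ Q(e g); that is, error vectors are queried in non-increasing order of likelihood. -/

import Mathlib

/-- The index of the least reliable flipped bit: the largest coordinate `j`
with `e j ≠ 0` (as a natural number; `0` if `e = 0`). -/
def jstar {n : ℕ} (e : Fin n → ZMod 2) : ℕ :=
  (Finset.univ.filter fun j => e j ≠ 0).sup fun j => (j : ℕ)

/-- The parent `π(e)` of an error vector: zero out coordinate `j*(e)` and,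
if `j*(e) > 0`, set coordinate `j*(e) - 1` to `1`; `π(0) = 0`. -/
def parent {n : ℕ} (e : Fin n → ZMod 2) : Fin n → ZMod 2 :=
  if e = 0 then 0
  else fun j =>
    if (j : ℕ) = jstar e then 0
    else if 0 < jstar e ∧ (j : ℕ) = jstar e - 1 then 1
    else e j
/-- `deltaN k` is the vector with a `1` at the coordinate of index `k` and `0` elsewhere. -/
def deltaN {n : ℕ} (k : ℕ) : Fin n → ZMod 2 := fun i => if (i : ℕ) = k then 1 else 0

/-- The children set `C(e)`. -/
def children {n : ℕ} (e : Fin n → ZMod 2) : Finset (Fin n → ZMod 2) :=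
  if e = 0 then {deltaN 0}
  else if jstar e = n - 1 then ∅
  else {e + deltaN (jstar e + 1), e + deltaN (jstar e) + deltaN (jstar e + 1)}
/-- Likelihood of an error vector given per-bit likelihoods `q`. -/
noncomputable def Q {n : ℕ} (q : Fin n → ZMod 2 → NNReal) (e : Fin n → ZMod 2) : NNReal :=
  ∏ j, q j (e j)
/-- An SGRAND run: `S g` is the candidate set before the `(g+1)`-st query and
`E g` is the `(g+1)`-st queried error vector. -/
def SGRANDRun {n : ℕ} (q : Fin n → ZMod 2 → NNReal)
    (S : ℕ → Finset (Fin n → ZMod 2)) (E : ℕ → Fin n → ZMod 2) : Prop :=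
  S 0 = {0} ∧
  ∀ g, (S g).Nonempty →
    E g ∈ S g ∧ (∀ v ∈ S g, Q q v ≤ Q q (E g)) ∧
    S (g + 1) = (S g).erase (E g) ∪ children (E g)

lemma ZMod.two_eq_zero_or_eq_one : ∀ x : ZMod 2, x = 0 ∨ x = 1 := by decide

lemma exists_val_eq_jstar {n : ℕ} {e : Fin n → ZMod 2} (he : e ≠ 0) :
    ∃ j : Fin n, (j : ℕ) = jstar e ∧ e j = 1 := by
  obtain ⟨i, hi⟩ := Function.ne_iff.mp he
  obtain ⟨j, hj, hsup⟩ := Finset.exists_mem_eq_sup (Finset.univ.filter fun j => e j ≠ 0)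
    ⟨i, by simpa using hi⟩ fun j : Fin n => (j : ℕ)
  refine ⟨j, hsup.symm, ?_⟩
  exact (ZMod.two_eq_zero_or_eq_one (e j)).resolve_left (Finset.mem_filter.mp hj).2

lemma apply_eq_zero_of_jstar_lt {n : ℕ} {e : Fin n → ZMod 2} {j : Fin n}
    (h : jstar e < (j : ℕ)) : e j = 0 := by
  by_contra hne
  have : (j : ℕ) ≤ jstar e :=
    Finset.le_sup (f := fun j : Fin n => (j : ℕ)) (by simpa using hne)
  omega

section Likelihood

variable {n : ℕ} {q : Fin n → ZMod 2 → NNReal}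

lemma Q_le_of_eqOn_compl {c e : Fin n → ZMod 2} (s : Finset (Fin n))
    (hs : ∀ x ∉ s, c x = e x) (h : ∏ x ∈ s, q x (c x) ≤ ∏ x ∈ s, q x (e x)) :
    Q q c ≤ Q q e := by
  rw [Q, Q, ← Finset.prod_mul_prod_compl s, ← Finset.prod_mul_prod_compl s (fun x => q x (e x)),
    Finset.prod_congr rfl fun x hx => congrArg (q x) (hs x (Finset.mem_compl.mp hx))]
  exact mul_le_mul_left h _

lemma Q_add_deltaN_le (H1 : ∀ j, q j 1 ≤ q j 0) {e : Fin n → ZMod 2} {k : ℕ}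
    (hk : ∀ i : Fin n, (i : ℕ) = k → e i = 0) : Q q (e + deltaN k) ≤ Q q e :=
  Finset.prod_le_prod' fun i _ => by
    by_cases hi : (i : ℕ) = k
    · simpa [deltaN, hi, hk i hi] using H1 i
    · simp [deltaN, hi]

lemma Q_add_deltaN_add_deltaN_le (H2 : ∀ j l : Fin n, j < l → q j 0 * q l 1 ≤ q j 1 * q l 0)
    {e : Fin n → ZMod 2} {a b : Fin n} (hab : a < b) (ha : e a = 1) (hb : e b = 0) :
    Q q (e + deltaN a + deltaN b) ≤ Q q e := by
  have hab' : (a : ℕ) ≠ b := Fin.val_ne_of_ne hab.ne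
  refine Q_le_of_eqOn_compl {a, b} (fun x hx => ?_) ?_
  · simp only [Finset.mem_insert, Finset.mem_singleton, not_or] at hx
    simp [deltaN, Fin.val_ne_of_ne hx.1, Fin.val_ne_of_ne hx.2]
  · have hca : (e + deltaN a + deltaN b : Fin n → ZMod 2) a = 0 := by
      simp [deltaN, ha, hab']; decide
    have hcb : (e + deltaN a + deltaN b : Fin n → ZMod 2) b = 1 := by
      simp [deltaN, hb, hab'.symm]
    rw [Finset.prod_pair hab.ne, Finset.prod_pair hab.ne, hca, hcb, ha, hb]
    exact H2 a b hab

lemma Q_le_of_mem_children (H1 : ∀ j, q j 1 ≤ q j 0)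
    (H2 : ∀ j l : Fin n, j < l → q j 0 * q l 1 ≤ q j 1 * q l 0)
    {e c : Fin n → ZMod 2} (hc : c ∈ children e) : Q q c ≤ Q q e := by
  unfold children at hc
  split_ifs at hc with he hlast
  · rw [Finset.mem_singleton.mp hc, he, ← zero_add (deltaN 0)]
    exact Q_add_deltaN_le H1 fun _ _ => rfl
  · simp at hc
  obtain ⟨a, ha, hea⟩ := exists_val_eq_jstar he
  rcases Finset.mem_insert.mp hc with rfl | hc
  · exact Q_add_deltaN_le H1 fun i hi => apply_eq_zero_of_jstar_lt (by omega)
  let b : Fin n := ⟨jstar e + 1, by omega⟩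
  have hab : a < b := Fin.lt_def.mpr (ha ▸ Nat.lt_succ_self _)
  have heb : e b = 0 := apply_eq_zero_of_jstar_lt (Nat.lt_succ_self _)
  rw [Finset.mem_singleton.mp hc, show jstar e + 1 = b from rfl, ← ha]
  exact Q_add_deltaN_add_deltaN_le H2 hab hea heb

end Likelihood

theorem sgrand_nonincreasing_general {n : ℕ} (q : Fin n → ZMod 2 → NNReal)
    (H1 : ∀ j, q j 1 ≤ q j 0)
    (H2 : ∀ j l : Fin n, j < l → q j 0 * q l 1 ≤ q j 1 * q l 0)
    (S : ℕ → Finset (Fin n → ZMod 2)) (E : ℕ → Fin n → ZMod 2)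
    (hrun : SGRANDRun q S E) :
    ∀ g : ℕ, (S g).Nonempty → (S (g + 1)).Nonempty →
      Q q (E (g + 1)) ≤ Q q (E g) := by
  intro g hg hg1
  obtain ⟨-, hstep⟩ := hrun
  obtain ⟨-, hmax, hnext⟩ := hstep g hg
  obtain ⟨hmem, -, -⟩ := hstep (g + 1) hg1
  rw [hnext] at hmem
  rcases Finset.mem_union.mp hmem with hold | hchild
  · exact hmax _ (Finset.mem_of_mem_erase hold)
  · exact Q_le_of_mem_children H1 H2 hchild

theorem sgrand_nonincreasing {n : ℕ} (hn : 1 ≤ n) (q : Fin n → ZMod 2 → NNReal)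
    (H1 : ∀ j, q j 1 ≤ q j 0)
    (H2 : ∀ j l : Fin n, j < l → q j 0 * q l 1 ≤ q j 1 * q l 0)
    (S : ℕ → Finset (Fin n → ZMod 2)) (E : ℕ → Fin n → ZMod 2)
    (hrun : SGRANDRun q S E) :
    ∀ g : ℕ, (S g).Nonempty → (S (g + 1)).Nonempty →
      Q q (E (g + 1)) ≤ Q q (E g) :=
  sgrand_nonincreasing_general q H1 H2 S E hrun
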